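/- The function G(b) = p·Q·F′(b) / F(b)² maps the open interval (0, ∞) bijectively onto (0, ∞): G tends to +∞ as b → 0⁺, G tends to 0 as b → +∞, and for every Θ > 0 there exists a unique b > 0 with G(b) = Θ. -/

import Mathlib

/-!
With `a = 2N₀`, `c = hp` and `u = c / (a b + c)`, which decreases from `1` to `0` on `[0, ∞)`, we
have `F b = b log₂ (1 + u)` and `F' b = ψ u` for `ψ u = log₂ (1 + u) - u (1 - u) / ((1 + u) ln 2)`
(`rateSlope`). Since `ψ' u = u (3 + u) / ((1 + u)² ln 2) > 0` and `ψ 0 = 0`, `F'` decreases strictly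
to `0`; hence `F' > 0` and `F` increases strictly from `F 0 = 0`. So `G = pQ F' / F²` is continuous
and strictly decreasing on `(0, ∞)`; it blows up at `0⁺` because `F'` stays above `F' 1 > 0` while
`F → 0`, and it tends to `0` at infinity because `F' → 0` while `F ≥ F 1 > 0`. The intermediate
value theorem then gives the bijection.
-/

open Real Filter Set Topology

theorem StrictAntiOn.lt_of_tendsto_atTop {f : ℝ → ℝ} {a l b : ℝ} (hf : StrictAntiOn f (Ioi a))
    (hl : Tendsto f atTop (𝓝 l)) (hb : a < b) : l < f b := by
  have hb1 : b + 1 ∈ Ioi a := mem_Ioi.2 (by linarith)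
  have hle : l ≤ f (b + 1) := le_of_tendsto hl <| by
    filter_upwards [eventually_ge_atTop (b + 1)] with x hx
    exact hf.antitoneOn hb1 (mem_Ioi.2 (by linarith)) hx
  exact hle.trans_lt (hf hb hb1 (lt_add_one b))

theorem StrictAntiOn.existsUnique_eq_of_tendsto {g : ℝ → ℝ} {a l Θ : ℝ}
    (hcont : ContinuousOn g (Ioi a)) (hanti : StrictAntiOn g (Ioi a))
    (hbot : Tendsto g (𝓝[>] a) atTop) (htop : Tendsto g atTop (𝓝 l)) (hΘ : l < Θ) :
    ∃! b, a < b ∧ g b = Θ := by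
  obtain ⟨x, hxΘ, hax⟩ := ((hbot.eventually_ge_atTop Θ).and self_mem_nhdsWithin).exists
  obtain ⟨y, hyΘ, hxy⟩ :=
    ((htop.eventually (eventually_lt_nhds hΘ)).and (eventually_ge_atTop x)).exists
  obtain ⟨b, hb, hgb⟩ := intermediate_value_Icc' hxy
    (hcont.mono fun z hz => lt_of_lt_of_le hax hz.1) ⟨hyΘ.le, hxΘ⟩
  have hab : a < b := lt_of_lt_of_le hax hb.1
  exact ⟨b, ⟨hab, hgb⟩, fun z ⟨haz, hgz⟩ => hanti.injOn haz hab (hgz.trans hgb.symm)⟩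

theorem StrictAntiOn.div_of_monotoneOn {s : Set ℝ} {g d : ℝ → ℝ} (hg : StrictAntiOn g s)
    (hd : MonotoneOn d s) (hgpos : ∀ x ∈ s, 0 < g x) (hdpos : ∀ x ∈ s, 0 < d x) :
    StrictAntiOn (fun x => g x / d x) s := fun x hx y hy hxy =>
  calc g y / d y < g x / d y := div_lt_div_of_pos_right (hg hx hy hxy) (hdpos y hy)
    _ ≤ g x / d x := div_le_div_of_nonneg_left (hgpos x hx).le (hdpos x hx) (hd hx hy hxy.le)

theorem Filter.Tendsto.div_atTop_of_tendsto_nhdsGT_zero {α : Type*} {l : Filter α}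
    {g d : α → ℝ} {m : ℝ} (hm : 0 < m) (hg : ∀ᶠ x in l, m ≤ g x) (hd : Tendsto d l (𝓝[>] 0)) :
    Tendsto (fun x => g x / d x) l atTop := by
  refine tendsto_atTop_mono' l ?_ ((tendsto_inv_nhdsGT_zero.comp hd).const_mul_atTop hm)
  filter_upwards [hg, hd.eventually self_mem_nhdsWithin] with x hgx hdx
  simpa [div_eq_mul_inv] using mul_le_mul_of_nonneg_right hgx (inv_nonneg.2 (le_of_lt hdx))

theorem strictMonoOn_of_hasDerivAt_of_strictAntiOn {f f' : ℝ → ℝ}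
    (hf : ∀ b, 0 ≤ b → HasDerivAt f (f' b) b) (hf'anti : StrictAntiOn f' (Ioi 0))
    (hf'lim : Tendsto f' atTop (𝓝 0)) : StrictMonoOn f (Ici 0) :=
  strictMonoOn_of_hasDerivWithinAt_pos (convex_Ici 0)
    (fun b hb => (hf b hb).continuousAt.continuousWithinAt)
    (fun b hb => (hf b (interior_subset hb)).hasDerivWithinAt)
    (fun b hb => hf'anti.lt_of_tendsto_atTop hf'lim (by simpa using hb))

theorem tendsto_and_existsUnique_of_deriv_strictAntiOn {f f' G : ℝ → ℝ} {k : ℝ} (hk : 0 < k)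
    (hf : ∀ b, 0 ≤ b → HasDerivAt f (f' b) b) (hf0 : f 0 = 0)
    (hf'cont : ContinuousOn f' (Ioi 0)) (hf'anti : StrictAntiOn f' (Ioi 0))
    (hf'lim : Tendsto f' atTop (𝓝 0)) (hG : ∀ b > 0, G b = k * f' b / f b ^ 2) :
    Tendsto G (𝓝[>] 0) atTop ∧ Tendsto G atTop (𝓝 0) ∧ ∀ Θ > 0, ∃! b, 0 < b ∧ G b = Θ := by
  have hf'pos : ∀ b > 0, 0 < f' b := fun b hb => hf'anti.lt_of_tendsto_atTop hf'lim hb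
  have hmono := strictMonoOn_of_hasDerivAt_of_strictAntiOn hf hf'anti hf'lim
  have hfpos : ∀ b > 0, 0 < f b := fun b hb => hf0 ▸ hmono self_mem_Ici (le_of_lt hb) hb
  have hsq : MonotoneOn (fun b => f b ^ 2) (Ioi 0) := fun x hx y hy hxy =>
    pow_le_pow_left₀ (hfpos x hx).le
      (hmono.monotoneOn (Ioi_subset_Ici_self hx) (Ioi_subset_Ici_self hy) hxy) 2
  have hGeq : EqOn G (fun b => k * f' b / f b ^ 2) (Ioi 0) := hG
  have hbot : Tendsto G (𝓝[>] 0) atTop := by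
    refine Tendsto.congr' (eventuallyEq_nhdsWithin_of_eqOn hGeq).symm
      (Tendsto.div_atTop_of_tendsto_nhdsGT_zero (mul_pos hk (hf'pos 1 one_pos)) ?_ ?_)
    · filter_upwards [Ioo_mem_nhdsGT one_pos] with b hb
      exact mul_le_mul_of_nonneg_left (hf'anti.antitoneOn hb.1 (mem_Ioi.2 one_pos) hb.2.le) hk.le
    · refine tendsto_nhdsWithin_iff.2 ⟨?_, ?_⟩
      · simpa [hf0] using ((hf 0 le_rfl).continuousAt.tendsto.pow 2).mono_left nhdsWithin_le_nhds
      · filter_upwards [self_mem_nhdsWithin] with b hb using pow_pos (hfpos b hb) 2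
  have htop : Tendsto G atTop (𝓝 0) := by
    refine squeeze_zero' ?_ ?_ (by simpa using (hf'lim.const_mul k).div_const (f 1 ^ 2))
    · filter_upwards [eventually_gt_atTop 0] with b hb
      rw [hG b hb]
      have := hf'pos b hb
      positivity
    · filter_upwards [eventually_ge_atTop 1] with b hb
      have hb0 : (0 : ℝ) < b := by linarith
      rw [hG b hb0]
      exact div_le_div_of_nonneg_left (mul_pos hk (hf'pos b hb0)).le
        (pow_pos (hfpos 1 one_pos) 2) (hsq (mem_Ioi.2 one_pos) hb0 hb)
  refine ⟨hbot, htop, fun Θ hΘ => StrictAntiOn.existsUnique_eq_of_tendsto ?_ ?_ hbot htop hΘ⟩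
  · refine ContinuousOn.congr ?_ hGeq
    refine (continuousOn_const.mul hf'cont).div ?_ fun b hb => (pow_pos (hfpos b hb) 2).ne'
    exact fun b hb => ((hf b (le_of_lt hb)).continuousAt.pow 2).continuousWithinAt
  · refine StrictAntiOn.congr ?_ hGeq.symm
    exact StrictAntiOn.div_of_monotoneOn
      (fun x hx y hy hxy => mul_lt_mul_of_pos_left (hf'anti hx hy hxy) hk) hsq
      (fun b hb => mul_pos hk (hf'pos b hb)) fun b hb => pow_pos (hfpos b hb) 2

noncomputable def rate (a c b : ℝ) : ℝ := b * logb 2 (1 + c / (a * b + c))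

noncomputable def rateSlope (u : ℝ) : ℝ := logb 2 (1 + u) - u * (1 - u) / ((1 + u) * log 2)

noncomputable def rateDeriv (a c b : ℝ) : ℝ := rateSlope (c / (a * b + c))

theorem hasDerivAt_rateSlope {u : ℝ} (hu : -1 < u) :
    HasDerivAt rateSlope (u * (3 + u) / ((1 + u) ^ 2 * log 2)) u := by
  have h1 : 1 + u ≠ 0 := by linarith
  have hlog : HasDerivAt (fun v => logb 2 (1 + v)) (1 / (1 + u) / log 2) u :=
    (((hasDerivAt_id u).const_add 1).log h1).div_const (log 2)
  have hfrac : HasDerivAt (fun v => v * (1 - v) / ((1 + v) * log 2))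
      (((1 * (1 - u) + u * (0 - 1)) * ((1 + u) * log 2) - u * (1 - u) * (1 * log 2))
        / ((1 + u) * log 2) ^ 2) u :=
    ((hasDerivAt_id u).mul ((hasDerivAt_const u 1).sub (hasDerivAt_id u))).div
      (((hasDerivAt_id u).const_add 1).mul_const (log 2)) (mul_ne_zero h1 (log_pos one_lt_two).ne')
  refine (hlog.sub hfrac).congr_deriv ?_
  have := (log_pos one_lt_two).ne'
  field_simp
  ring

theorem strictMonoOn_rateSlope : StrictMonoOn rateSlope (Ici 0) := by
  have hderiv : ∀ u ∈ Ici (0 : ℝ), HasDerivAt rateSlope (u * (3 + u) / ((1 + u) ^ 2 * log 2)) u :=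
    fun u hu => hasDerivAt_rateSlope (by linarith [mem_Ici.1 hu])
  refine strictMonoOn_of_hasDerivWithinAt_pos (convex_Ici 0)
    (fun u hu => (hderiv u hu).continuousAt.continuousWithinAt)
    (fun u hu => (hderiv u (interior_subset hu)).hasDerivWithinAt) fun u hu => ?_
  rw [interior_Ici, mem_Ioi] at hu
  have := log_pos one_lt_two
  positivity

theorem hasDerivAt_rate {a c b : ℝ} (hc : 0 < c) (hb : 0 < a * b + c) :
    HasDerivAt (rate a c) (rateDeriv a c b) b := by
  have hB : a * b + c ≠ 0 := hb.ne'
  have hu : 1 + c / (a * b + c) ≠ 0 := by positivity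
  have hinner : HasDerivAt (fun x => 1 + c / (a * x + c))
      ((0 * (a * b + c) - c * (a * 1)) / (a * b + c) ^ 2) b :=
    ((hasDerivAt_const b c).div (((hasDerivAt_id b).const_mul a).add_const c) hB).const_add 1
  refine ((hasDerivAt_id' b).mul ((hinner.log hu).div_const (log 2))).congr_deriv ?_
  have := (log_pos one_lt_two).ne'
  simp only [rateDeriv, rateSlope, logb]
  field_simp
  ring

theorem rateDeriv_eq {a c b : ℝ} (hc : 0 < c) (hb : 0 < a * b + c) :
    rateDeriv a c b = logb 2 ((a * b + 2 * c) / (a * b + c)) -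
      a * b * c / (log 2 * (a * b + 2 * c) * (a * b + c)) := by
  have hB : a * b + c ≠ 0 := hb.ne'
  have hA : a * b + 2 * c ≠ 0 := by linarith
  have h1 : 1 + c / (a * b + c) = (a * b + 2 * c) / (a * b + c) := by field_simp; ring
  have := (log_pos one_lt_two).ne'
  rw [rateDeriv, rateSlope, h1]
  field_simp
  ring

theorem strictAntiOn_rateDeriv {a c : ℝ} (ha : 0 < a) (hc : 0 < c) :
    StrictAntiOn (rateDeriv a c) (Ioi 0) := by
  refine strictMonoOn_rateSlope.comp_strictAntiOn (f := fun b => c / (a * b + c)) ?_ ?_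
  · intro x hx y hy hxy
    simp only [mem_Ioi] at hx hy
    exact div_lt_div_of_pos_left hc (by positivity) (by nlinarith)
  · intro x hx
    simp only [mem_Ioi, mem_Ici] at hx ⊢
    positivity

theorem continuousOn_rateDeriv {a c : ℝ} (ha : 0 ≤ a) (hc : 0 < c) :
    ContinuousOn (rateDeriv a c) (Ioi 0) := by
  have hpos : ∀ b ∈ Ioi (0 : ℝ), 0 < a * b + c := fun b hb => by
    simp only [mem_Ioi] at hb; positivity
  refine ContinuousOn.comp (g := rateSlope) (f := fun b => c / (a * b + c)) (t := Ioi (-1)) ?_ ?_ ?_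
  · exact fun u hu => (hasDerivAt_rateSlope hu).continuousAt.continuousWithinAt
  · exact continuousOn_const.div (by fun_prop) fun b hb => (hpos b hb).ne'
  · intro b hb
    have := hpos b hb
    simp only [mem_Ioi]
    have : 0 < c / (a * b + c) := by positivity
    linarith

theorem tendsto_rateDeriv_atTop {a c : ℝ} (ha : 0 < a) :
    Tendsto (rateDeriv a c) atTop (𝓝 0) := by
  have hu : Tendsto (fun b => c / (a * b + c)) atTop (𝓝 0) :=
    tendsto_const_nhds.div_atTop (tendsto_atTop_add_const_right _ c (tendsto_id.const_mul_atTop ha))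
  have h0 : rateSlope 0 = 0 := by simp [rateSlope]
  rw [← h0]
  exact (hasDerivAt_rateSlope neg_one_lt_zero).continuousAt.tendsto.comp hu

/-- The function `G(b) = p·Q·F′(b) / F(b)²` maps `(0, ∞)` bijectively onto
`(0, ∞)`: `G → +∞` as `b → 0⁺`, `G → 0` as `b → +∞`, and for every `Θ > 0` there exists
a unique `b > 0` with `G(b) = Θ`. -/
theorem stmt_14 (h p N₀ Q : ℝ) (hh : 0 < h) (hp : 0 < p) (hN : 0 < N₀) (hQ : 0 < Q)
    (F F' G : ℝ → ℝ)
    (hF : ∀ b : ℝ, F b = b * Real.logb 2 (1 + h * p / (2 * N₀ * b + h * p)))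
    (hF' : ∀ b : ℝ, F' b =
      Real.logb 2 ((2 * N₀ * b + 2 * h * p) / (2 * N₀ * b + h * p)) -
        (2 * N₀ * b * h * p) /
          (Real.log 2 * (2 * N₀ * b + 2 * h * p) * (2 * N₀ * b + h * p)))
    (hG : ∀ b : ℝ, G b = p * Q * F' b / (F b) ^ 2) :
    Filter.Tendsto G (nhdsWithin 0 (Set.Ioi 0)) Filter.atTop ∧
    Filter.Tendsto G Filter.atTop (nhds 0) ∧
    (∀ Θ : ℝ, 0 < Θ → ∃! b : ℝ, 0 < b ∧ G b = Θ) := by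
  have ha : 0 < 2 * N₀ := by positivity
  have hc : 0 < h * p := by positivity
  have hpos : ∀ b, 0 ≤ b → 0 < 2 * N₀ * b + h * p := fun b hb => by positivity
  refine tendsto_and_existsUnique_of_deriv_strictAntiOn (mul_pos hp hQ)
    (fun b hb => hasDerivAt_rate hc (hpos b hb)) (by simp [rate])
    (continuousOn_rateDeriv ha.le hc) (strictAntiOn_rateDeriv ha hc) (tendsto_rateDeriv_atTop ha)
    fun b hb => ?_
  rw [hG, hF, hF', rateDeriv_eq hc (hpos b hb.le)]
  simp only [rate, mul_assoc]
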